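/- arXiv:2105.12546 — 2 statements merged into one kernel-verified Lean document; each statement's English description precedes it below -/
import Mathlib

section
/- Let X = P·S, where P and S are symmetric N×N real matrices and P is positive definite with minimum and maximum eigenvalues λ_min and λ_max. Then |X − Xᵗ|₂² ≤ 2·((1 − λ_min/λ_max)² / (1 + (λ_min/λ_max)²))·|X|₂². -/
open Matrix

private lemma frob_eq_trace {N : ℕ} (A : Matrix (Fin N) (Fin N) ℝ) :
    ∑ i, ∑ j, (A i j) ^ 2 = Matrix.trace (Aᵀ * A) := by
  rw [Matrix.trace]
  simp only [Matrix.diag, Matrix.mul_apply, Matrix.transpose_apply, pow_two]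
  exact Finset.sum_comm

private lemma frob_conj {N : ℕ} (U A : Matrix (Fin N) (Fin N) ℝ)
    (h1 : Uᵀ * U = 1) : ∑ i, ∑ j, ((U * A * Uᵀ) i j) ^ 2 = ∑ i, ∑ j, (A i j) ^ 2 := by
  rw [frob_eq_trace, frob_eq_trace]
  have key : (U * A * Uᵀ)ᵀ * (U * A * Uᵀ) = U * (Aᵀ * A) * Uᵀ := by
    simp only [Matrix.transpose_mul, Matrix.transpose_transpose, Matrix.mul_assoc]
    rw [show Uᵀ * (U * (A * Uᵀ)) = A * Uᵀ by rw [← Matrix.mul_assoc, h1, Matrix.one_mul]]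
  rw [key, Matrix.trace_mul_comm (U * (Aᵀ * A)) Uᵀ, ← Matrix.mul_assoc, h1, Matrix.one_mul]

private lemma ptwise (m M a b t : ℝ) (hm : 0 < m) (hmM : m ≤ M)
    (ha1 : m ≤ a) (ha2 : a ≤ M) (hb1 : m ≤ b) (hb2 : b ≤ M) :
    ((a - b) * t) ^ 2 ≤ (1 - m / M) ^ 2 / (1 + (m / M) ^ 2) * ((a * t) ^ 2 + (b * t) ^ 2) := by
  have hM : 0 < M := hm.trans_le hmM
  have h1 : a * m ≤ b * M := by nlinarith
  have h2 : b * m ≤ a * M := by nlinarith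
  have hkey : (a - b) ^ 2 * (M ^ 2 + m ^ 2) ≤ (M - m) ^ 2 * (a ^ 2 + b ^ 2) := by
    nlinarith [mul_nonneg (sub_nonneg.2 h1) (sub_nonneg.2 h2)]
  have hden : 0 < M ^ 2 + m ^ 2 := by positivity
  have hc : (1 - m / M) ^ 2 / (1 + (m / M) ^ 2) = (M - m) ^ 2 / (M ^ 2 + m ^ 2) := by
    field_simp
  rw [hc]
  rw [div_mul_eq_mul_div, le_div_iff₀ hden]
  nlinarith [sq_nonneg t, mul_le_mul_of_nonneg_right hkey (sq_nonneg t)]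

/-- If `X = P * S` with `P, S` symmetric and `P` positive definite with
minimum and maximum eigenvalues `lmin` and `lmax`, then
`|X - Xᵀ|₂² ≤ 2 ((1 - lmin/lmax)² / (1 + (lmin/lmax)²)) |X|₂²`,
where `|·|₂` is the Frobenius norm. -/
theorem stmt0 {N : ℕ} (P S : Matrix (Fin N) (Fin N) ℝ)
    (hP : P.PosDef) (hS : S.IsSymm) (lmin lmax : ℝ)
    (hmin : IsLeast (Set.range hP.1.eigenvalues) lmin)
    (hmax : IsGreatest (Set.range hP.1.eigenvalues) lmax) :
    ∑ i, ∑ j, ((P * S - (P * S)ᵀ) i j) ^ 2 ≤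
      2 * ((1 - lmin / lmax) ^ 2 / (1 + (lmin / lmax) ^ 2)) *
        ∑ i, ∑ j, ((P * S) i j) ^ 2 := by
  classical
  have hH := hP.1
  set U : Matrix (Fin N) (Fin N) ℝ := (hH.eigenvectorUnitary : Matrix (Fin N) (Fin N) ℝ) with hUdef
  set lam : Fin N → ℝ := hH.eigenvalues with hlamdef
  -- positivity facts about eigenvalues
  have hlmin_pos : 0 < lmin := by
    obtain ⟨i, hi⟩ := hmin.1
    rw [← hi]; exact hP.eigenvalues_pos i
  have hle : ∀ i, lmin ≤ lam i := fun i => hmin.2 ⟨i, rfl⟩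
  have hge : ∀ i, lam i ≤ lmax := fun i => hmax.2 ⟨i, rfl⟩
  have hminmax : lmin ≤ lmax := hmax.2 hmin.1
  -- spectral theorem
  have hUmem := (Matrix.IsHermitian.eigenvectorUnitary hH).2
  have hU1 : Uᵀ * U = 1 := by
    have := (Matrix.mem_unitaryGroup_iff').mp hUmem
    simpa [Matrix.star_eq_conjTranspose,
      Matrix.conjTranspose_eq_transpose_of_trivial] using this
  have hU2 : U * Uᵀ = 1 := by
    have := (Matrix.mem_unitaryGroup_iff).mp hUmem
    simpa [Matrix.star_eq_conjTranspose,
      Matrix.conjTranspose_eq_transpose_of_trivial] using this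
  have hspec : P = U * Matrix.diagonal lam * Uᵀ := by
    have := hH.spectral_theorem
    simpa [Matrix.star_eq_conjTranspose, Matrix.conjTranspose_eq_transpose_of_trivial,
      RCLike.ofReal_real_eq_id] using this
  set T : Matrix (Fin N) (Fin N) ℝ := Uᵀ * S * U with hTdef
  have hTsymm : ∀ i j, T j i = T i j := by
    intro i j
    have : Tᵀ = T := by
      rw [hTdef]
      simp only [Matrix.transpose_mul, Matrix.transpose_transpose, hS.eq, Matrix.mul_assoc]
    calc T j i = Tᵀ i j := rfl
    _ = T i j := by rw [this]
  set D : Matrix (Fin N) (Fin N) ℝ := Matrix.diagonal lam with hDdef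
  have hX : P * S = U * (D * T) * Uᵀ := by
    rw [hspec, hTdef]
    simp only [Matrix.mul_assoc, hU2, Matrix.mul_one]
  have hXt : (P * S)ᵀ = U * (T * D) * Uᵀ := by
    rw [hX]
    simp only [Matrix.transpose_mul, Matrix.transpose_transpose, hDdef,
      Matrix.diagonal_transpose, Matrix.mul_assoc]
    congr 1
    rw [show Tᵀ = T by rw [hTdef]; simp only [Matrix.transpose_mul,
      Matrix.transpose_transpose, hS.eq, Matrix.mul_assoc]]
  have hsub : P * S - (P * S)ᵀ = U * (D * T - T * D) * Uᵀ := by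
    rw [hXt, hX, Matrix.mul_sub, Matrix.sub_mul]
  -- reduce to diagonalized form
  rw [hsub, hX, frob_conj U _ hU1, frob_conj U _ hU1]
  have hentry1 : ∀ i j, (D * T - T * D) i j = (lam i - lam j) * T i j := by
    intro i j
    simp [hDdef, Matrix.sub_apply, Matrix.diagonal_mul, Matrix.mul_diagonal]
    ring
  have hentry2 : ∀ i j, (D * T) i j = lam i * T i j := by
    intro i j
    simp [hDdef, Matrix.diagonal_mul]
  simp only [hentry1, hentry2]
  set c : ℝ := (1 - lmin / lmax) ^ 2 / (1 + (lmin / lmax) ^ 2) with hcdef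
  have hswap : ∑ i, ∑ j, (lam j * T i j) ^ 2 = ∑ i, ∑ j, (lam i * T i j) ^ 2 := by
    rw [Finset.sum_comm]
    exact Finset.sum_congr rfl fun i _ => Finset.sum_congr rfl fun j _ => by
      rw [hTsymm i j]
  calc ∑ i, ∑ j, ((lam i - lam j) * T i j) ^ 2
      ≤ ∑ i, ∑ j, c * ((lam i * T i j) ^ 2 + (lam j * T i j) ^ 2) := by
        refine Finset.sum_le_sum fun i _ => Finset.sum_le_sum fun j _ => ?_
        exact ptwise lmin lmax (lam i) (lam j) (T i j) hlmin_pos hminmax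
          (hle i) (hge i) (hle j) (hge j)
    _ = c * (∑ i, ∑ j, (lam i * T i j) ^ 2) + c * (∑ i, ∑ j, (lam j * T i j) ^ 2) := by
        simp only [mul_add, Finset.sum_add_distrib, Finset.mul_sum]
    _ = 2 * c * ∑ i, ∑ j, (lam i * T i j) ^ 2 := by
        rw [hswap]; ring
end

section
/- If V ∈ C²(ℝ^N; ℝ^N), then for every φ ∈ C²_c(ℝ^N) it holds ∫ φ²·|DV|₂² dx = (1/2)·∫ φ²·|curl V|₂² dx + ∫ φ²·(div V)² dx + ∫ [ 2·(Dφ², V)·div V + (D²φ², V⊗V)₂ ] dx, where all integrals are over ℝ^N. -/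
/-! With `ψ = φ²`, the pointwise identity `|A|₂² = ½|A - Aᵀ|₂² + Tr(A²)` for `A = DV` reduces the
claim to `∫ ψ Tr((DV)²) = ∫ ψ (div V)² + ∫ [2 Dψ(V) div V + D²ψ(V, V)]`. The difference of the two
integrands is the divergence of the compactly supported `C¹` field
`ψ ((DV) V - (div V) V) - Dψ(V) V`, and the integral of a divergence vanishes. In computing that
divergence, the terms `ψ D(div V)(V)` coming from `(DV) V` and from `(div V) V` agree by the
symmetry of `D²V`, and cancel, as do the two terms `Dψ((DV) V)`. -/

open MeasureTheory
open scoped RealInnerProductSpace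

/-- The Jacobian matrix `DV` of a vector field `V : ℝᴺ → ℝᴺ`:
`(jac V x) i j = ∂_j V^i (x)`. -/
noncomputable def jac {N : ℕ}
    (V : EuclideanSpace ℝ (Fin N) → EuclideanSpace ℝ (Fin N))
    (x : EuclideanSpace ℝ (Fin N)) : Matrix (Fin N) (Fin N) ℝ :=
  fun i j => fderiv ℝ V x (EuclideanSpace.single j 1) i

/-- The Hessian matrix of a scalar function `f : ℝᴺ → ℝ`:
`(hess f x) i j = ∂_j ∂_i f (x)`. -/
noncomputable def hess {N : ℕ} (f : EuclideanSpace ℝ (Fin N) → ℝ)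
    (x : EuclideanSpace ℝ (Fin N)) : Matrix (Fin N) (Fin N) ℝ :=
  fun i j =>
    fderiv ℝ (fun y => fderiv ℝ f y (EuclideanSpace.single i 1)) x
      (EuclideanSpace.single j 1)

section Divergence

variable {E : Type*} [NormedAddCommGroup E] [NormedSpace ℝ E] [FiniteDimensional ℝ E]

noncomputable def traceCLM : (E →L[ℝ] E) →L[ℝ] ℝ :=
  LinearMap.toContinuousLinearMap (LinearMap.trace ℝ E ∘ₗ ContinuousLinearMap.coeLM ℝ)

lemma traceCLM_apply (L : E →L[ℝ] E) : traceCLM L = LinearMap.trace ℝ E L := rfl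

lemma traceCLM_smulRight (f : E →L[ℝ] ℝ) (v : E) : traceCLM (f.smulRight v) = f v := by
  simp [traceCLM]

noncomputable def divergence (U : E → E) (x : E) : ℝ := traceCLM (fderiv ℝ U x)

variable {U W V : E → E} {f ψ : E → ℝ} {x : E}

lemma fderiv_divergence (hU : DifferentiableAt ℝ (fderiv ℝ U) x) :
    fderiv ℝ (divergence U) x = traceCLM.comp (fderiv ℝ (fderiv ℝ U) x) :=
  ((traceCLM (E := E)).hasFDerivAt.comp x hU.hasFDerivAt).fderiv

lemma ContDiff.divergence {n : WithTop ℕ∞} (hU : ContDiff ℝ (n + 1) U) :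
    ContDiff ℝ n (divergence U) :=
  (traceCLM (E := E)).contDiff.comp (hU.fderiv_right le_rfl)

lemma divergence_sub (hU : DifferentiableAt ℝ U x) (hW : DifferentiableAt ℝ W x) :
    divergence (fun y => U y - W y) x = divergence U x - divergence W x := by
  simp only [divergence, fderiv_fun_sub hU hW, map_sub]

lemma divergence_smul (hf : DifferentiableAt ℝ f x) (hU : DifferentiableAt ℝ U x) :
    divergence (fun y => f y • U y) x = fderiv ℝ f x (U x) + f x * divergence U x := by
  simp only [divergence, fderiv_fun_smul hf hU, map_add, map_smul, traceCLM_smulRight,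
    smul_eq_mul]
  ring

lemma divergence_fderiv_apply_self (hV : ContDiffAt ℝ 2 V x) :
    divergence (fun y => fderiv ℝ V y (V y)) x =
      fderiv ℝ (divergence V) x (V x) + traceCLM ((fderiv ℝ V x).comp (fderiv ℝ V x)) := by
  have hDV : DifferentiableAt ℝ (fderiv ℝ V) x :=
    (hV.fderiv_right (m := 1) le_rfl).differentiableAt one_ne_zero
  have hsymm : (fderiv ℝ (fderiv ℝ V) x).flip (V x) = fderiv ℝ (fderiv ℝ V) x (V x) := by
    ext v
    exact (hV.isSymmSndFDerivAt (by simp)).eq v (V x)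
  rw [divergence, fderiv_clm_apply hDV (hV.differentiableAt (by norm_num)), map_add, hsymm,
    fderiv_divergence hDV, add_comm]
  rfl

noncomputable def fluxField (ψ : E → ℝ) (V : E → E) (x : E) : E :=
  ψ x • (fderiv ℝ V x (V x) - divergence V x • V x) - fderiv ℝ ψ x (V x) • V x

lemma divergence_fluxField (hV : ContDiff ℝ 2 V) (hψ : ContDiff ℝ 2 ψ) (x : E) :
    divergence (fluxField ψ V) x =
      ψ x * (traceCLM ((fderiv ℝ V x).comp (fderiv ℝ V x)) - divergence V x ^ 2)
        - 2 * fderiv ℝ ψ x (V x) * divergence V x - fderiv ℝ (fderiv ℝ ψ) x (V x) (V x) := by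
  have hV1 : DifferentiableAt ℝ V x := hV.differentiable (by norm_num) x
  have hψ1 : DifferentiableAt ℝ ψ x := hψ.differentiable (by norm_num) x
  have hDψ : DifferentiableAt ℝ (fderiv ℝ ψ) x :=
    (hψ.fderiv_right (m := 1) le_rfl).differentiable one_ne_zero x
  have hDVV : DifferentiableAt ℝ (fun y => fderiv ℝ V y (V y)) x :=
    ((hV.fderiv_right (m := 1) le_rfl).differentiable one_ne_zero x).clm_apply hV1
  have hdivV : DifferentiableAt ℝ (divergence V) x :=
    (hV.divergence (n := 1)).differentiable one_ne_zero x
  have hA := hDVV.fun_sub (hdivV.fun_smul hV1)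
  have hDψV : fderiv ℝ (fun y => fderiv ℝ ψ y (V y)) x (V x) =
      fderiv ℝ (fderiv ℝ ψ) x (V x) (V x) + fderiv ℝ ψ x (fderiv ℝ V x (V x)) := by
    rw [fderiv_clm_apply hDψ hV1]
    exact add_comm _ _
  unfold fluxField
  rw [divergence_sub (hψ1.fun_smul hA) ((hDψ.clm_apply hV1).fun_smul hV1),
    divergence_smul hψ1 hA, divergence_sub hDVV (hdivV.fun_smul hV1),
    divergence_smul (hDψ.clm_apply hV1) hV1, divergence_smul hdivV hV1,
    divergence_fderiv_apply_self hV.contDiffAt, hDψV, map_sub, map_smul, smul_eq_mul]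
  ring

lemma contDiff_fluxField (hV : ContDiff ℝ 2 V) (hψ : ContDiff ℝ 2 ψ) :
    ContDiff ℝ 1 (fluxField ψ V) := by
  have hV1 : ContDiff ℝ 1 V := hV.of_le (by norm_num)
  exact ((hψ.of_le (by norm_num)).smul (((hV.fderiv_right le_rfl).clm_apply hV1).sub
    ((hV.divergence (n := 1)).smul hV1))).sub (((hψ.fderiv_right le_rfl).clm_apply hV1).smul hV1)

lemma hasCompactSupport_fluxField (hψs : HasCompactSupport ψ) :
    HasCompactSupport (fluxField ψ V) := by
  refine hψs.mono' fun x hx => by_contra fun hxψ => hx ?_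
  have hψx : ψ x = 0 := image_eq_zero_of_notMem_tsupport hxψ
  have hDψx : fderiv ℝ ψ x = 0 :=
    Function.notMem_support.mp fun h => hxψ (support_fderiv_subset ℝ h)
  simp [fluxField, hψx, hDψx]

variable [MeasurableSpace E] [BorelSpace E] (μ : Measure E) [μ.IsAddHaarMeasure]

lemma integral_fderiv_apply_eq_zero {F : Type*} [NormedAddCommGroup F] [NormedSpace ℝ F]
    {g : E → F} (hg : ContDiff ℝ 1 g) (hgs : HasCompactSupport g) (v : E) :
    ∫ x, fderiv ℝ g x v ∂μ = 0 := by
  have hg' : Integrable (fun x => fderiv ℝ g x v) μ :=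
    ((hg.continuous_fderiv one_ne_zero).clm_apply continuous_const).integrable_of_hasCompactSupport
      ((hgs.fderiv ℝ).comp_left (g := fun L : E →L[ℝ] F => L v) rfl)
  simpa using integral_bilinear_fderiv_right_eq_neg_left_of_integrable (μ := μ)
    (f := fun _ => (1 : ℝ)) (g := g) (v := v) (B := ContinuousLinearMap.lsmul ℝ ℝ)
    (by simp) (by simpa using hg')
    (by simpa using hg.continuous.integrable_of_hasCompactSupport hgs)
    (fun _ _ => differentiableAt_const _) (fun x _ => hg.differentiable one_ne_zero x)

lemma integrable_divergence (hU : ContDiff ℝ 1 U) (hUs : HasCompactSupport U) :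
    Integrable (divergence U) μ :=
  ((traceCLM (E := E)).continuous.comp
    (hU.continuous_fderiv one_ne_zero)).integrable_of_hasCompactSupport
      ((hUs.fderiv ℝ).comp_left (map_zero _))

lemma integral_divergence_eq_zero (hU : ContDiff ℝ 1 U) (hUs : HasCompactSupport U) :
    ∫ x, divergence U x ∂μ = 0 := by
  have hDU : Integrable (fderiv ℝ U) μ :=
    (hU.continuous_fderiv one_ne_zero).integrable_of_hasCompactSupport (hUs.fderiv ℝ)
  have hDU_zero : ∫ x, fderiv ℝ U x ∂μ = 0 := by
    ext v
    rw [ContinuousLinearMap.integral_apply hDU, integral_fderiv_apply_eq_zero μ hU hUs]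
    rfl
  simp only [divergence]
  rw [ContinuousLinearMap.integral_comp_comm _ hDU, hDU_zero, map_zero]

end Divergence

section Coordinates

variable {ι : Type*} [Fintype ι] [DecidableEq ι]

lemma EuclideanSpace.clm_apply_eq_sum {F : Type*} [AddCommGroup F] [Module ℝ F]
    [TopologicalSpace F] (L : EuclideanSpace ℝ ι →L[ℝ] F) (v : EuclideanSpace ℝ ι) :
    L v = ∑ i, v i • L (EuclideanSpace.single i 1) := by
  conv_lhs => rw [← (EuclideanSpace.basisFun ι ℝ).sum_repr v]
  simp

lemma traceCLM_eq_sum (L : EuclideanSpace ℝ ι →L[ℝ] EuclideanSpace ℝ ι) :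
    traceCLM L = ∑ i, L (EuclideanSpace.single i 1) i := by
  rw [traceCLM_apply, LinearMap.trace_eq_matrix_trace ℝ (EuclideanSpace.basisFun ι ℝ).toBasis]
  simp [Matrix.trace, LinearMap.toMatrix_apply]

lemma traceCLM_comp_eq_sum (L M : EuclideanSpace ℝ ι →L[ℝ] EuclideanSpace ℝ ι) :
    traceCLM (L.comp M) =
      ∑ i, ∑ j, L (EuclideanSpace.single j 1) i * M (EuclideanSpace.single i 1) j := by
  rw [traceCLM_eq_sum]
  refine Finset.sum_congr rfl fun i _ => ?_
  rw [L.comp_apply, EuclideanSpace.clm_apply_eq_sum L]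
  simp [mul_comm]

end Coordinates

lemma Finset.sum_sq_eq_half_sum_sq_sub_swap_add {ι : Type*} (s : Finset ι) (A : ι → ι → ℝ) :
    ∑ i ∈ s, ∑ j ∈ s, A i j ^ 2 =
      1 / 2 * ∑ i ∈ s, ∑ j ∈ s, (A i j - A j i) ^ 2 + ∑ i ∈ s, ∑ j ∈ s, A i j * A j i := by
  have hswap : ∑ i ∈ s, ∑ j ∈ s, A j i ^ 2 = ∑ i ∈ s, ∑ j ∈ s, A i j ^ 2 := Finset.sum_comm
  simp only [sub_sq, Finset.sum_add_distrib, Finset.sum_sub_distrib, hswap, mul_assoc,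
    ← Finset.mul_sum]
  ring

section JacobianHessian

variable {N : ℕ}

lemma divergence_eq_sum_jac (V : EuclideanSpace ℝ (Fin N) → EuclideanSpace ℝ (Fin N))
    (x : EuclideanSpace ℝ (Fin N)) : divergence V x = ∑ i, jac V x i i :=
  traceCLM_eq_sum _

lemma traceCLM_fderiv_comp_self_eq_sum_jac
    (V : EuclideanSpace ℝ (Fin N) → EuclideanSpace ℝ (Fin N)) (x : EuclideanSpace ℝ (Fin N)) :
    traceCLM ((fderiv ℝ V x).comp (fderiv ℝ V x)) = ∑ i, ∑ j, jac V x i j * jac V x j i :=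
  traceCLM_comp_eq_sum _ _

lemma sum_hess_mul_mul {f : EuclideanSpace ℝ (Fin N) → ℝ} {x : EuclideanSpace ℝ (Fin N)}
    (hf : DifferentiableAt ℝ (fderiv ℝ f) x) (v : EuclideanSpace ℝ (Fin N)) :
    ∑ i, ∑ j, hess f x i j * v i * v j = fderiv ℝ (fderiv ℝ f) x v v := by
  have hhess : ∀ i j, hess f x i j =
      fderiv ℝ (fderiv ℝ f) x (EuclideanSpace.single j 1) (EuclideanSpace.single i 1) := by
    intro i j
    simp [hess, fderiv_clm_apply hf (differentiableAt_const _)]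
  rw [EuclideanSpace.clm_apply_eq_sum (fderiv ℝ (fderiv ℝ f) x v),
    EuclideanSpace.clm_apply_eq_sum (fderiv ℝ (fderiv ℝ f) x)]
  simp [hhess, Finset.mul_sum, mul_comm, mul_left_comm]

lemma divergence_fluxField_eq_sum_jac {V : EuclideanSpace ℝ (Fin N) → EuclideanSpace ℝ (Fin N)}
    {ψ : EuclideanSpace ℝ (Fin N) → ℝ} (hV : ContDiff ℝ 2 V) (hψ : ContDiff ℝ 2 ψ)
    (x : EuclideanSpace ℝ (Fin N)) :
    divergence (fluxField ψ V) x =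
      ψ x * ∑ i, ∑ j, jac V x i j * jac V x j i - ψ x * (∑ i, jac V x i i) ^ 2
        - (2 * ⟪gradient ψ x, V x⟫ * ∑ i, jac V x i i
          + ∑ i, ∑ j, hess ψ x i j * V x i * V x j) := by
  rw [divergence_fluxField hV hψ, divergence_eq_sum_jac, traceCLM_fderiv_comp_self_eq_sum_jac,
    inner_gradient_left,
    sum_hess_mul_mul ((hψ.fderiv_right (m := 1) le_rfl).differentiable one_ne_zero x)]
  ring

lemma continuous_jac_apply {V : EuclideanSpace ℝ (Fin N) → EuclideanSpace ℝ (Fin N)}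
    (hV : ContDiff ℝ 1 V) (i j : Fin N) : Continuous fun x => jac V x i j :=
  (PiLp.continuous_apply 2 _ i).comp
    ((hV.continuous_fderiv one_ne_zero).clm_apply continuous_const)

end JacobianHessian

/-- For `V ∈ C²(ℝᴺ; ℝᴺ)` and `φ ∈ C²_c(ℝᴺ)`:
`∫ φ²|DV|₂² = (1/2)∫ φ²|curl V|₂² + ∫ φ²(div V)² + ∫ [2 (Dφ², V) div V + (D²φ², V⊗V)₂]`. -/
theorem stmt2 {N : ℕ}
    (V : EuclideanSpace ℝ (Fin N) → EuclideanSpace ℝ (Fin N))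
    (φ : EuclideanSpace ℝ (Fin N) → ℝ)
    (hV : ContDiff ℝ 2 V) (hφ : ContDiff ℝ 2 φ) (hsupp : HasCompactSupport φ) :
    ∫ x, (φ x) ^ 2 * ∑ i, ∑ j, (jac V x i j) ^ 2 =
      (1 / 2) * (∫ x, (φ x) ^ 2 * ∑ i, ∑ j, (jac V x i j - jac V x j i) ^ 2)
      + (∫ x, (φ x) ^ 2 * (∑ i, jac V x i i) ^ 2)
      + ∫ x, (2 * ⟪gradient (fun y => (φ y) ^ 2) x, V x⟫ * (∑ i, jac V x i i)
          + ∑ i, ∑ j, hess (fun y => (φ y) ^ 2) x i j * (V x i) * (V x j)) := by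
  have hψ : ContDiff ℝ 2 fun y => φ y ^ 2 := hφ.pow 2
  have hψs : HasCompactSupport fun y => φ y ^ 2 :=
    hsupp.comp_left (g := fun t => t ^ 2) (by norm_num)
  have hint : ∀ h, Continuous h → Integrable fun x => φ x ^ 2 * h x := fun h hh =>
    (hψ.continuous.mul hh).integrable_of_hasCompactSupport hψs.mul_right
  have hjac : ∀ i j, Continuous fun x => jac V x i j :=
    continuous_jac_apply (hV.of_le (by norm_num))
  have hcurl : ∀ x, φ x ^ 2 * ∑ i, ∑ j, jac V x i j ^ 2 =
      1 / 2 * (φ x ^ 2 * ∑ i, ∑ j, (jac V x i j - jac V x j i) ^ 2)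
        + φ x ^ 2 * ∑ i, ∑ j, jac V x i j * jac V x j i := fun x => by
    rw [Finset.sum_sq_eq_half_sum_sq_sub_swap_add _ (jac V x)]
    ring
  have hflux : ∀ x, 2 * ⟪gradient (fun y => φ y ^ 2) x, V x⟫ * (∑ i, jac V x i i)
      + ∑ i, ∑ j, hess (fun y => φ y ^ 2) x i j * V x i * V x j =
      φ x ^ 2 * (∑ i, ∑ j, jac V x i j * jac V x j i) - φ x ^ 2 * (∑ i, jac V x i i) ^ 2
        - divergence (fluxField (fun y => φ y ^ 2) V) x := fun x => by
    rw [divergence_fluxField_eq_sum_jac hV hψ]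
    ring
  have hF := contDiff_fluxField (V := V) hV hψ
  have hFs := hasCompactSupport_fluxField (V := V) hψs
  simp only [hcurl, hflux]
  rw [integral_add ((hint _ (by fun_prop)).const_mul _) (hint _ (by fun_prop)),
    integral_const_mul, integral_sub ((hint _ (by fun_prop)).sub' (hint _ (by fun_prop)))
      (integrable_divergence volume hF hFs),
    integral_sub (hint _ (by fun_prop)) (hint _ (by fun_prop)),
    integral_divergence_eq_zero volume hF hFs]
  ring
end
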